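/- arXiv:1102.2717 — 2 statements merged into one kernel-verified Lean document; each statement's English description precedes it below -/
import Mathlib

section
/- Fix l ≠ k and let σ = σ_x^{lk} = |l⟩⟨k| + |k⟩⟨l| be an N×N matrix, let a be a nonzero real number, and let K be a Hermitian N×N matrix. Then there exist C > 0 and ξ0 > 0 such that for all ξ ∈ (0, ξ0) and all t ≥ 0: ‖e^{−i(ξ(a/2)σ + ξ²K)t} σ e^{i(ξ(a/2)σ + ξ²K)t} − σ‖ ≤ C ξ, i.e., the conjugation of σ by the unitary one-parameter group generated by ξ(a/2)σ + ξ²K stays within O(ξ) of σ uniformly in time. -/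
open Matrix

noncomputable section

attribute [local instance] Matrix.normedAddCommGroup Matrix.normedSpace

/-- `σ_x^{lk} = |l⟩⟨k| + |k⟩⟨l|` as a complex `N × N` matrix. -/
def sigmaXC {N : ℕ} (l k : Fin N) : Matrix (Fin N) (Fin N) ℂ :=
  Matrix.single l k 1 + Matrix.single k l 1

/-!
With `c = ξ a / 2` and `H = c σ + ξ² K`, the unitary `U = e^{-iHt}` commutes with `H`, so
`U σ U* - σ = c⁻¹ (ξ² K - U (ξ² K) U*)`. Conjugation by a unitary enlarges the entrywise sup norm
by at most a factor `N²`, and the prefactor `ξ² / c = 2 ξ / a` gives the bound, uniformly in `t`.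
-/

theorem conj_sub_self_eq_smul_of_commute {𝕜 A : Type*} [Field 𝕜] [Ring A] [Algebra 𝕜 A]
    {U V σ K : A} {c : 𝕜} (hc : c ≠ 0) (hUV : U * V = 1) (hU : Commute U (c • σ + K)) :
    U * σ * V - σ = c⁻¹ • (K - U * K * V) := by
  have hσ : σ = c⁻¹ • ((c • σ + K) - K) := by rw [add_sub_cancel_right, inv_smul_smul₀ hc]
  have hconj : U * (c • σ + K) * V = c • σ + K := by rw [hU.eq, mul_assoc, hUV, mul_one]
  calc U * σ * V - σ
      = c⁻¹ • (U * (c • σ + K) * V - U * K * V) - c⁻¹ • ((c • σ + K) - K) := by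
        conv_lhs => rw [hσ]
        simp only [mul_smul_comm, smul_mul_assoc, mul_sub, sub_mul]
    _ = c⁻¹ • (K - U * K * V) := by
        rw [hconj, ← smul_sub]
        abel_nf

namespace Matrix

theorem norm_mul_le_card_mul {l m n α : Type*} [Fintype l] [Fintype m] [Fintype n]
    [NormedRing α] (A : Matrix l m α) (B : Matrix m n α) :
    ‖A * B‖ ≤ Fintype.card m * (‖A‖ * ‖B‖) := by
  refine (norm_le_iff (by positivity)).2 fun i j => ?_
  calc ‖(A * B) i j‖ ≤ ∑ p, ‖A i p * B p j‖ := norm_sum_le _ _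
    _ ≤ ∑ _p : m, ‖A‖ * ‖B‖ := by
        gcongr with p
        exact (norm_mul_le _ _).trans (mul_le_mul (norm_entry_le_entrywise_sup_norm _)
          (norm_entry_le_entrywise_sup_norm _) (norm_nonneg _) (norm_nonneg _))
    _ = Fintype.card m * (‖A‖ * ‖B‖) := by simp

variable {n 𝕜 : Type*} [Fintype n] [DecidableEq n] [RCLike 𝕜]

theorem norm_conj_le_of_mem_unitaryGroup {U : Matrix n n 𝕜} (hU : U ∈ unitaryGroup n 𝕜)
    (M : Matrix n n 𝕜) : ‖U * M * star U‖ ≤ Fintype.card n ^ 2 * ‖M‖ := by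
  have hU1 : ‖U‖ ≤ 1 := entrywise_sup_norm_bound_of_unitary hU
  have hU1' : ‖star U‖ ≤ 1 := (norm_conjTranspose U).trans_le hU1
  calc ‖U * M * star U‖ ≤ Fintype.card n * (Fintype.card n * (‖U‖ * ‖M‖) * ‖star U‖) := by
        grw [norm_mul_le_card_mul, norm_mul_le_card_mul]
    _ ≤ Fintype.card n * (Fintype.card n * (1 * ‖M‖) * 1) := by gcongr
    _ = Fintype.card n ^ 2 * ‖M‖ := by ring

theorem norm_sub_conj_le_of_mem_unitaryGroup {U : Matrix n n 𝕜} (hU : U ∈ unitaryGroup n 𝕜)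
    (M : Matrix n n 𝕜) : ‖M - U * M * star U‖ ≤ (Fintype.card n ^ 2 + 1) * ‖M‖ := by
  calc ‖M - U * M * star U‖ ≤ ‖M‖ + ‖U * M * star U‖ := norm_sub_le _ _
    _ ≤ ‖M‖ + Fintype.card n ^ 2 * ‖M‖ := by grw [norm_conj_le_of_mem_unitaryGroup hU]
    _ = (Fintype.card n ^ 2 + 1) * ‖M‖ := by ring

theorem star_exp_of_mem_skewAdjoint {A : Matrix n n 𝕜} (hA : A ∈ skewAdjoint _) :
    star (NormedSpace.exp A) = NormedSpace.exp (-A) := by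
  rw [star_eq_conjTranspose, ← exp_conjTranspose, ← star_eq_conjTranspose,
    skewAdjoint.mem_iff.mp hA]

theorem exp_mem_unitaryGroup_of_mem_skewAdjoint {A : Matrix n n 𝕜} (hA : A ∈ skewAdjoint _) :
    NormedSpace.exp A ∈ unitaryGroup n 𝕜 := by
  rw [Unitary.mem_iff, star_exp_of_mem_skewAdjoint hA,
    ← exp_add_of_commute _ _ (Commute.refl A).neg_left,
    ← exp_add_of_commute _ _ (Commute.refl A).neg_right, neg_add_cancel, add_neg_cancel,
    NormedSpace.exp_zero, and_self]

end Matrix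

theorem sigmaXC_isHermitian {N : ℕ} (l k : Fin N) : (sigmaXC l k).IsHermitian := by
  simp only [IsHermitian, sigmaXC, conjTranspose_add, conjTranspose_single, star_one, add_comm]

theorem conjugation_stays_close_general {N : ℕ} (l k : Fin N)
    (a : ℝ) (ha : a ≠ 0)
    (K : Matrix (Fin N) (Fin N) ℂ) (hK : K.IsHermitian) :
    ∃ C : ℝ, 0 < C ∧ ∃ ξ0 : ℝ, 0 < ξ0 ∧
      ∀ ξ ∈ Set.Ioo (0:ℝ) ξ0, ∀ t : ℝ, 0 ≤ t →
        ‖NormedSpace.exp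
              ((-(Complex.I * (t:ℂ))) • ((↑(ξ * (a / 2)) : ℂ) • sigmaXC l k + ((ξ:ℂ) ^ 2) • K)) *
            sigmaXC l k *
            NormedSpace.exp
              ((Complex.I * (t:ℂ)) • ((↑(ξ * (a / 2)) : ℂ) • sigmaXC l k + ((ξ:ℂ) ^ 2) • K)) -
          sigmaXC l k‖ ≤ C * ξ := by
  refine ⟨2 * ((N : ℝ) ^ 2 + 1) * (‖K‖ + 1) / |a|, by positivity, 1, one_pos, ?_⟩
  rintro ξ ⟨hξ, -⟩ t -
  set c : ℂ := ↑(ξ * (a / 2))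
  set H := c • sigmaXC l k + ((ξ:ℂ) ^ 2) • K
  have hc : c ≠ 0 := by simp [c, ha, hξ.ne']
  have hreal (r : ℝ) : IsSelfAdjoint (r : ℂ) := Complex.conj_ofReal r
  have hH : IsSelfAdjoint H :=
    ((hreal _).smul (sigmaXC_isHermitian l k).isSelfAdjoint).add
      (((hreal ξ).pow 2).smul hK.isSelfAdjoint)
  have hA : (-(Complex.I * (t:ℂ))) • H ∈ skewAdjoint _ :=
    hH.smul_mem_skewAdjoint (by simp [skewAdjoint.mem_iff])
  set U := NormedSpace.exp ((-(Complex.I * (t:ℂ))) • H)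
  have hU : U ∈ unitaryGroup (Fin N) ℂ := exp_mem_unitaryGroup_of_mem_skewAdjoint hA
  have hstar : NormedSpace.exp ((Complex.I * (t:ℂ)) • H) = star U := by
    rw [star_exp_of_mem_skewAdjoint hA, ← neg_smul, neg_neg]
  rw [hstar, conj_sub_self_eq_smul_of_commute hc (Unitary.mul_star_self_of_mem hU)
    ((Commute.refl H).smul_left _).exp_left, norm_smul]
  calc ‖c⁻¹‖ * ‖(ξ:ℂ) ^ 2 • K - U * ((ξ:ℂ) ^ 2 • K) * star U‖
      ≤ ‖c⁻¹‖ * ((N ^ 2 + 1) * ‖(ξ:ℂ) ^ 2 • K‖) := by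
        grw [norm_sub_conj_le_of_mem_unitaryGroup hU, Fintype.card_fin]
    _ = 2 * ((N : ℝ) ^ 2 + 1) * ‖K‖ / |a| * ξ := by
        simp only [c, norm_inv, norm_smul, norm_pow, Complex.norm_real, Real.norm_eq_abs,
          abs_mul, abs_div, abs_two, abs_of_pos hξ]
        field_simp
    _ ≤ 2 * ((N : ℝ) ^ 2 + 1) * (‖K‖ + 1) / |a| * ξ := by gcongr; linarith

/-- For `σ = σ_x^{lk}`, `a ≠ 0` real and `K` Hermitian, the conjugation
of `σ` by the one-parameter unitary group generated by `ξ (a/2) σ + ξ² K` stays within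
`O(ξ)` of `σ`, uniformly in `t ≥ 0`. -/
theorem conjugation_stays_close {N : ℕ} (l k : Fin N) (hlk : l ≠ k)
    (a : ℝ) (ha : a ≠ 0)
    (K : Matrix (Fin N) (Fin N) ℂ) (hK : K.IsHermitian) :
    ∃ C : ℝ, 0 < C ∧ ∃ ξ0 : ℝ, 0 < ξ0 ∧
      ∀ ξ ∈ Set.Ioo (0:ℝ) ξ0, ∀ t : ℝ, 0 ≤ t →
        ‖NormedSpace.exp
              ((-(Complex.I * (t:ℂ))) • ((↑(ξ * (a / 2)) : ℂ) • sigmaXC l k + ((ξ:ℂ) ^ 2) • K)) *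
            sigmaXC l k *
            NormedSpace.exp
              ((Complex.I * (t:ℂ)) • ((↑(ξ * (a / 2)) : ℂ) • sigmaXC l k + ((ξ:ℂ) ^ 2) • K)) -
          sigmaXC l k‖ ≤ C * ξ :=
  conjugation_stays_close_general l k a ha K hK
end
end

section
/- Let ω_1, …, ω_m be distinct nonzero real numbers and A_1, …, A_m be N×N complex matrices, and suppose that H(τ) = Σ_{k=1}^m e^{iω_k τ} A_k is Hermitian for every τ ∈ ℝ. Then the average L = lim_{θ→∞} (1/θ) ∫_0^θ H(τ) H'(τ) dτ exists (where H'(τ) = Σ_k iω_k e^{iω_k τ} A_k), and the matrix K = −i L is Hermitian. -/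
/-!
Since `H` is Hermitian-valued, so is its derivative `H'`, hence `(H H')ᴴ = H' H`. Both products
are again finite exponential sums, and the mean of `e^{iμτ}` is `1` for `μ = 0` and `0`
otherwise, so their means exist. Their sum `H H' + H' H = (H²)'` has coefficients carrying the
factor `i(ω_j + ω_k)`, which kills exactly the zero-frequency terms, so its mean vanishes.
Thus `L + Lᴴ = 0`, i.e. `-i L` is Hermitian.
-/

open Matrix MeasureTheory intervalIntegral Filter

noncomputable section

attribute [local instance] Matrix.normedAddCommGroup Matrix.normedSpace

open scoped Topology

section Average

variable {E : Type*} [NormedAddCommGroup E] [NormedSpace ℝ E]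

def HasAverage (f : ℝ → E) (a : E) : Prop :=
  Tendsto (fun θ : ℝ => θ⁻¹ • ∫ τ in (0:ℝ)..θ, f τ) atTop (𝓝 a)

variable {f g : ℝ → E} {a b : E}

theorem HasAverage.sum {ι : Type*} (s : Finset ι) {f : ι → ℝ → E} {a : ι → E}
    (hfi : ∀ i ∈ s, ∀ θ, IntervalIntegrable (f i) volume 0 θ)
    (hf : ∀ i ∈ s, HasAverage (f i) (a i)) :
    HasAverage (fun τ => ∑ i ∈ s, f i τ) (∑ i ∈ s, a i) := by
  refine (tendsto_finsetSum s hf).congr fun θ => ?_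
  rw [integral_finsetSum fun i hi => hfi i hi θ, Finset.smul_sum]

theorem HasAverage.unique (ha : HasAverage f a) (hb : HasAverage f b) : a = b :=
  tendsto_nhds_unique ha hb

theorem HasAverage.add (hfi : ∀ θ, IntervalIntegrable f volume 0 θ)
    (hgi : ∀ θ, IntervalIntegrable g volume 0 θ) (hf : HasAverage f a) (hg : HasAverage g b) :
    HasAverage (fun τ => f τ + g τ) (a + b) := by
  refine (Tendsto.add hf hg).congr fun θ => ?_
  simp only [integral_add (hfi θ) (hgi θ), smul_add]

theorem hasAverage_star [StarAddMonoid E] [StarModule ℝ E] [ContinuousStar E]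
    (hf : HasAverage f a) : HasAverage (fun τ => star (f τ)) (star a) := by
  have hcomm : ∀ θ : ℝ, ∫ τ in (0:ℝ)..θ, star (f τ) = star (∫ τ in (0:ℝ)..θ, f τ) := fun θ => by
    have h (s : Set ℝ) := (starL' ℝ : E ≃L[ℝ] E).integral_comp_comm (μ := volume.restrict s) f
    simp only [intervalIntegral, starL'_apply] at h ⊢
    rw [h, h, star_sub]
  refine ((continuous_star.tendsto a).comp hf).congr fun θ => ?_
  simp only [Function.comp_apply, hcomm, star_smul, star_trivial]

theorem hasAverage_zero_of_hasDerivAt [CompleteSpace E] {f' : ℝ → E}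
    (hf : ∀ τ, HasDerivAt f (f' τ) τ) (hf' : ∀ θ, IntervalIntegrable f' volume 0 θ)
    (hbdd : IsBoundedUnder (· ≤ ·) atTop fun θ => ‖f θ‖) : HasAverage f' 0 := by
  have hsub : Tendsto (fun θ : ℝ => θ⁻¹ • f θ - θ⁻¹ • f 0) atTop (𝓝 0) := by
    simpa using (tendsto_inv_atTop_zero.zero_smul_isBoundedUnder_le hbdd).sub
      (tendsto_inv_atTop_zero.smul_const (f 0))
  refine hsub.congr fun θ => ?_
  rw [integral_eq_sub_of_hasDerivAt (fun τ _ => hf τ) (hf' θ), smul_sub]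

end Average

open Complex

theorem hasDerivAt_cexp_I_mul (μ τ : ℝ) :
    HasDerivAt (fun t : ℝ => cexp (I * μ * t)) (I * μ * cexp (I * μ * τ)) τ := by
  simpa [mul_comm] using ((hasDerivAt_id τ).ofReal_comp.const_mul (I * μ)).cexp

theorem HasAverage.smul_const {E : Type*} [NormedAddCommGroup E] [NormedSpace ℂ E]
    [CompleteSpace E] {f : ℝ → ℂ} {c : ℂ} (hf : HasAverage f c) (B : E) :
    HasAverage (fun τ => f τ • B) (c • B) :=
  (Tendsto.smul_const hf B).congr fun θ => by rw [intervalIntegral.integral_smul_const, smul_assoc]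

theorem hasAverage_cexp (μ : ℝ) :
    HasAverage (fun τ : ℝ => cexp (I * μ * τ)) (if μ = 0 then 1 else 0) := by
  rcases eq_or_ne μ 0 with rfl | hμ
  · refine tendsto_const_nhds.congr' ?_
    filter_upwards [eventually_ne_atTop 0] with θ hθ
    simp [hθ]
  · have hIμ : I * μ ≠ 0 := mul_ne_zero I_ne_zero (ofReal_ne_zero.2 hμ)
    rw [if_neg hμ]
    refine hasAverage_zero_of_hasDerivAt (f := fun τ : ℝ => cexp (I * μ * τ) / (I * μ))
      (fun τ => ?_) (fun θ => (by fun_prop : Continuous _).intervalIntegrable 0 θ) ?_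
    · simpa [mul_div_cancel_left₀ _ hIμ] using (hasDerivAt_cexp_I_mul μ τ).div_const (I * μ)
    · refine isBoundedUnder_of ⟨1 / ‖I * μ‖, fun θ => ?_⟩
      rw [norm_div]
      gcongr
      simp [Complex.norm_exp]

theorem HasDerivAt.isSelfAdjoint {F : Type*} [NormedAddCommGroup F] [NormedSpace ℝ F]
    [StarAddMonoid F] [StarModule ℝ F] [ContinuousStar F] {f : ℝ → F} {f' : F} {x : ℝ}
    (hf : HasDerivAt f f' x) (h : ∀ t, IsSelfAdjoint (f t)) : IsSelfAdjoint f' := by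
  have hstar : (fun t => star (f t)) = f := funext fun t => (h t).star_eq
  exact (hstar ▸ hf.star).unique hf

section TrigPoly

variable {E : Type*} {ι κ : Type*} [Fintype ι] [Fintype κ]

def trigPoly [AddCommMonoid E] [Module ℂ E] (ω : ι → ℝ) (A : ι → E) (τ : ℝ) : E :=
  ∑ k, cexp (I * ω k * τ) • A k

theorem trigPoly_add [AddCommMonoid E] [Module ℂ E] (ω : ι → ℝ) (A B : ι → E) (τ : ℝ) :
    trigPoly ω A τ + trigPoly ω B τ = trigPoly ω (A + B) τ := by
  simp only [trigPoly, Pi.add_apply, smul_add, Finset.sum_add_distrib]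

theorem trigPoly_mul_trigPoly [Ring E] [Algebra ℂ E] (ω : ι → ℝ) (ω' : κ → ℝ) (A : ι → E)
    (B : κ → E) (τ : ℝ) :
    trigPoly ω A τ * trigPoly ω' B τ =
      trigPoly (fun p : ι × κ => ω p.1 + ω' p.2) (fun p => A p.1 * B p.2) τ := by
  simp only [trigPoly, Finset.sum_mul_sum, ← Finset.univ_product_univ, Finset.sum_product,
    smul_mul_smul_comm, ← Complex.exp_add, ofReal_add]
  congr! 4
  ring

theorem trigPoly_leibniz [Ring E] [Algebra ℂ E] (ω : ι → ℝ) (ω' : κ → ℝ) (A : ι → E)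
    (B : κ → E) (τ : ℝ) :
    trigPoly ω A τ * trigPoly ω' (fun k => (I * ω' k) • B k) τ +
        trigPoly ω (fun j => (I * ω j) • A j) τ * trigPoly ω' B τ =
      trigPoly (fun p : ι × κ => ω p.1 + ω' p.2)
        (fun p => (I * ↑(ω p.1 + ω' p.2)) • (A p.1 * B p.2)) τ := by
  rw [trigPoly_mul_trigPoly, trigPoly_mul_trigPoly, trigPoly_add]
  congr 1
  funext p
  simp only [Pi.add_apply, mul_smul_comm, smul_mul_assoc, ← add_smul, ofReal_add]
  ring_nf

variable [NormedAddCommGroup E] [NormedSpace ℂ E] (ω : ι → ℝ) (A : ι → E)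

theorem continuous_trigPoly : Continuous (trigPoly ω A) := by
  unfold trigPoly
  fun_prop

theorem hasDerivAt_trigPoly (τ : ℝ) :
    HasDerivAt (trigPoly ω A) (trigPoly ω (fun k => (I * ω k) • A k) τ) τ := by
  unfold trigPoly
  simp only [smul_smul]
  exact HasDerivAt.fun_sum fun k _ => by
    simpa [mul_comm] using (hasDerivAt_cexp_I_mul (ω k) τ).smul_const (A k)

theorem hasAverage_trigPoly [CompleteSpace E] :
    HasAverage (trigPoly ω A) (∑ k, if ω k = 0 then A k else 0) := by
  refine HasAverage.sum _ (fun k _ θ => (by fun_prop : Continuous _).intervalIntegrable 0 θ)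
    fun k _ => ?_
  simpa only [ite_smul, one_smul, zero_smul] using (hasAverage_cexp (ω k)).smul_const (A k)

theorem hasAverage_trigPoly_deriv [CompleteSpace E] :
    HasAverage (trigPoly ω fun k => (I * ω k) • A k) 0 := by
  convert hasAverage_trigPoly ω fun k => (I * ω k) • A k using 1
  refine (Finset.sum_eq_zero fun k _ => ?_).symm
  split_ifs with hk <;> simp [hk]

end TrigPoly

theorem average_of_HHprime_hermitian_general {N m : ℕ}
    (ω : Fin m → ℝ) (A : Fin m → Matrix (Fin N) (Fin N) ℂ)
    (hHerm : ∀ τ : ℝ,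
      (∑ j, Complex.exp (Complex.I * (ω j) * τ) • A j).IsHermitian) :
    ∃ L : Matrix (Fin N) (Fin N) ℂ,
      Tendsto
        (fun θ : ℝ => (θ⁻¹ : ℝ) •
          ∫ τ in (0:ℝ)..θ,
            (∑ j, Complex.exp (Complex.I * (ω j) * τ) • A j) *
              (∑ j, (Complex.I * (ω j) * Complex.exp (Complex.I * (ω j) * τ)) • A j))
        atTop (nhds L) ∧
      ((-Complex.I) • L).IsHermitian := by
  set H := trigPoly ω A
  set H' := trigPoly ω fun j => (I * ω j) • A j
  have hH' : ∀ τ : ℝ, ∑ j, (I * ω j * cexp (I * ω j * τ)) • A j = H' τ := fun τ => by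
    simp only [H', trigPoly, smul_smul, mul_comm]
  have hHsa : ∀ τ, IsSelfAdjoint (H τ) := fun τ => (hHerm τ).isSelfAdjoint
  have hH'sa : ∀ τ, IsSelfAdjoint (H' τ) :=
    fun τ => (hasDerivAt_trigPoly ω A τ).isSelfAdjoint hHsa
  obtain ⟨L, hL⟩ : ∃ L, HasAverage (fun τ => H τ * H' τ) L :=
    ⟨_, by simpa only [H, H', trigPoly_mul_trigPoly] using hasAverage_trigPoly _ _⟩
  have hL' : HasAverage (fun τ => H' τ * H τ) (star L) := by
    simpa only [star_mul, (hHsa _).star_eq, (hH'sa _).star_eq] using hasAverage_star hL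
  have hzero : HasAverage (fun τ => H τ * H' τ + H' τ * H τ) 0 := by
    simpa only [H, H', trigPoly_leibniz] using hasAverage_trigPoly_deriv _ _
  have hHc := continuous_trigPoly ω A
  have hH'c := continuous_trigPoly ω fun j => (I * ω j) • A j
  have hLL : L + star L = 0 :=
    (hL.add (fun θ => (hHc.matrix_mul hH'c).intervalIntegrable 0 θ)
      (fun θ => (hH'c.matrix_mul hHc).intervalIntegrable 0 θ) hL').unique hzero
  refine ⟨L, by simp only [hH']; exact hL, ?_⟩
  rw [IsHermitian, conjTranspose_smul, ← star_eq_conjTranspose, eq_neg_of_add_eq_zero_right hLL]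
  simp

/-- Let `H(τ) = Σ_k e^{iω_k τ} A_k` be Hermitian for all `τ`, with
distinct nonzero real frequencies `ω_k`, and `H'(τ) = Σ_k iω_k e^{iω_k τ} A_k`.  Then
the average `L = lim_{θ→∞} (1/θ) ∫_0^θ H(τ) H'(τ) dτ` exists and `K = -i L` is
Hermitian. -/
theorem average_of_HHprime_hermitian {N m : ℕ}
    (ω : Fin m → ℝ) (A : Fin m → Matrix (Fin N) (Fin N) ℂ)
    (hinj : Function.Injective ω) (hω : ∀ j, ω j ≠ 0)
    (hHerm : ∀ τ : ℝ,
      (∑ j, Complex.exp (Complex.I * (ω j) * τ) • A j).IsHermitian) :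
    ∃ L : Matrix (Fin N) (Fin N) ℂ,
      Tendsto
        (fun θ : ℝ => (θ⁻¹ : ℝ) •
          ∫ τ in (0:ℝ)..θ,
            (∑ j, Complex.exp (Complex.I * (ω j) * τ) • A j) *
              (∑ j, (Complex.I * (ω j) * Complex.exp (Complex.I * (ω j) * τ)) • A j))
        atTop (nhds L) ∧
      ((-Complex.I) • L).IsHermitian :=
  average_of_HHprime_hermitian_general ω A hHerm
end
end
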